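/- The Pareto suboptimality gap of an action not in the super Pareto front is strictly positive: let {μ_a}_{a ∈ A} be a finite family of vectors in ℝ^D and O* its super Pareto front. If a ∉ O*, then Δ_a := min{ε ≥ 0 : (μ_a + ε·1) is incomparable with μ_{a'} for all a' ∈ O*} satisfies Δ_a > 0, and in fact Δ_a = max_{a' ∈ O*_a} min_{1≤j≤D} (μ_{a'}^(j) − μ_a^(j)) where O*_a is the set of actions in O* that super-dominate a. -/

import Mathlib

/-!
Among the actions super-dominating `a`, one maximising the coordinate sum lies on the super
Pareto front, so `O*_a` is nonempty and the maximum `Δ` of the margins `min_j (μ_{a'} j - μ_a j)`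
over `O*_a` is attained at some `c` and is positive. Shifting `μ_a` by `ε < Δ` leaves it strictly
below `μ_c`, so `Δ` is the least admissible shift. At `ε = Δ` the shifted vector lies below `μ_c`
coordinatewise, so no front member is strictly below it, and strictly dominating a front member
would give that member a margin larger than `Δ`.
-/

open Set

local infixl:50 " ≺ " => StrongLT

section SuperPareto

variable {ι A : Type*}

def superParetoFront {α : Type*} [LT α] (μ : A → ι → α) : Set A :=
  {b | ∀ b', ¬ μ b ≺ μ b'}

theorem exists_mem_superParetoFront_strongLT {α : Type*} [AddCommMonoid α] [LinearOrder α]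
    [IsOrderedCancelAddMonoid α] [Finite A] [Fintype ι] [Nonempty ι] (μ : A → ι → α)
    {a b : A} (hab : μ a ≺ μ b) : ∃ c ∈ superParetoFront μ, μ a ≺ μ c := by
  obtain ⟨c, hac, hmax⟩ :=
    exists_max_image {c | μ a ≺ μ c} (fun c => ∑ j, μ c j) (toFinite _) ⟨b, hab⟩
  refine ⟨c, fun d hcd => ?_, hac⟩
  exact (Finset.sum_lt_sum_of_nonempty Finset.univ_nonempty fun j _ => hcd j).not_ge
    (hmax d (hac.trans_le hcd.le))

noncomputable def superMargin (u v : ι → ℝ) : ℝ :=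
  ⨅ j, (v j - u j)

theorem superMargin_eq_sInf (u v : ι → ℝ) :
    superMargin u v = sInf {y | ∃ j, y = v j - u j} := by
  simp only [superMargin, iInf, range, eq_comm]

variable [Finite ι] {u v : ι → ℝ}

theorem superMargin_le (u v : ι → ℝ) (j : ι) : superMargin u v ≤ v j - u j :=
  ciInf_le (finite_range _).bddBelow j

theorem lt_superMargin_iff [Nonempty ι] {ε : ℝ} :
    ε < superMargin u v ↔ ∀ j, u j + ε < v j := by
  refine ⟨fun h j => by linarith [superMargin_le u v j], fun h => ?_⟩
  obtain ⟨j, hj⟩ := exists_eq_ciInf_of_finite (f := fun j => v j - u j)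
  rw [superMargin, ← hj]
  linarith [h j]

theorem superMargin_pos_iff [Nonempty ι] : 0 < superMargin u v ↔ u ≺ v := by
  simp only [lt_superMargin_iff, add_zero, StrongLT]

theorem isLeast_superMargin [Nonempty ι] {μ : A → ι → ℝ} {O : Set A} {c : A} (hc : c ∈ O)
    (huc : u ≺ μ c) (hO : ∀ b ∈ O, ¬ μ b ≺ μ c)
    (hmax : ∀ b ∈ O, u ≺ μ b → superMargin u (μ b) ≤ superMargin u (μ c)) :
    IsLeast {ε | 0 ≤ ε ∧ ∀ b ∈ O, ¬ (∀ j, u j + ε < μ b j) ∧ ¬ (∀ j, μ b j < u j + ε)}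
      (superMargin u (μ c)) := by
  have hpos := superMargin_pos_iff.2 huc
  refine ⟨⟨hpos.le, fun b hb => ⟨fun hub => ?_, fun hbu => hO b hb fun j => ?_⟩⟩, ?_⟩
  · have hlt := lt_superMargin_iff.2 hub
    have hub' : u ≺ μ b := fun j => by linarith [hub j]
    exact (hmax b hb hub').not_gt hlt
  · linarith [hbu j, superMargin_le u (μ c) j]
  · rintro ε ⟨-, hε⟩
    exact not_lt.1 fun h => (hε c hc).1 (lt_superMargin_iff.1 h)

end SuperPareto

/-- The Pareto suboptimality gap of an action not in the super Pareto front is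
strictly positive, and equals `max_{a' ∈ O*_a} min_j (μ_{a'}^(j) − μ_a^(j))`,
where `O*_a` is the set of super Pareto optimal actions super-dominating `a`. -/
theorem psg_of_suboptimal_pos
    {A : Type*} [Fintype A] (D : ℕ) (hD : 0 < D) (μ : A → Fin D → ℝ) (a : A)
    (ha : a ∉ {b : A | ∀ b' : A, ¬(∀ j, μ b j < μ b' j)}) :
    0 < sSup {x : ℝ | ∃ a' : A, (∀ b' : A, ¬(∀ j, μ a' j < μ b' j)) ∧
        (∀ j, μ a j < μ a' j) ∧ x = sInf {y : ℝ | ∃ j : Fin D, y = μ a' j - μ a j}} ∧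
    IsLeast {ε : ℝ | 0 ≤ ε ∧ ∀ a' ∈ {b : A | ∀ b' : A, ¬(∀ j, μ b j < μ b' j)},
        (¬(∀ j, μ a j + ε < μ a' j) ∧ ¬(∀ j, μ a' j < μ a j + ε))}
      (sSup {x : ℝ | ∃ a' : A, (∀ b' : A, ¬(∀ j, μ a' j < μ b' j)) ∧
        (∀ j, μ a j < μ a' j) ∧ x = sInf {y : ℝ | ∃ j : Fin D, y = μ a' j - μ a j}}) := by
  have : Nonempty (Fin D) := ⟨⟨0, hD⟩⟩
  set Oa := {b ∈ superParetoFront μ | μ a ≺ μ b}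
  have hX : {x : ℝ | ∃ a' : A, (∀ b' : A, ¬(∀ j, μ a' j < μ b' j)) ∧
      (∀ j, μ a j < μ a' j) ∧ x = sInf {y : ℝ | ∃ j : Fin D, y = μ a' j - μ a j}} =
      (fun b => superMargin (μ a) (μ b)) '' Oa := by
    ext x
    simp only [superMargin_eq_sInf, mem_ofPred_eq, mem_image, eq_comm (a := x)]
    exact exists_congr fun _ => and_assoc.symm
  obtain ⟨b, hab⟩ : ∃ b, μ a ≺ μ b := by simpa [StrongLT] using ha
  obtain ⟨c, ⟨hcO, hac⟩, hmax⟩ := exists_max_image Oa (fun b => superMargin (μ a) (μ b))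
    (toFinite _) (exists_mem_superParetoFront_strongLT μ hab)
  have hsup : sSup ((fun b => superMargin (μ a) (μ b)) '' Oa) = superMargin (μ a) (μ c) :=
    IsGreatest.csSup_eq ⟨mem_image_of_mem _ ⟨hcO, hac⟩, forall_mem_image.2 hmax⟩
  rw [hX, hsup]
  exact ⟨superMargin_pos_iff.2 hac,
    isLeast_superMargin hcO hac (fun b hb => hb c) fun b hb hab => hmax b ⟨hb, hab⟩⟩
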